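/- The MPW solution satisfies Sobolev consistency for TUX games: for every TUX game w on N and distinct players i, j ∈ N, MPW_i(w) = MPW_i( w_{−j}^{So,MPW} ), where w_{−j}^{So,MPW}(S,π) = (s/(n−1))( w(S∪{j},π) − MPW_j(w) ) + (1 − s/(n−1)) w_{−j}(S,π). -/

import Mathlib

open Finset BigOperators

namespace TUX

/-- A (raw) game in partition function form: assigns a real worth to each
coalition together with a partition (of the outside players). -/
abbrev Game := Finset ℕ → Finset (Finset ℕ) → ℝ

/-- A TU game (characteristic function). -/
abbrev TUGame := Finset ℕ → ℝ

/-- A solution for TUX games: given a player set and a game, assigns payoffs. -/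
abbrev Sol := Finset ℕ → Game → ℕ → ℝ

/-- `w` is a genuine TUX game: the empty coalition has worth 0. -/
def IsTUX (w : Game) : Prop := ∀ π, w ∅ π = 0

/-- `π` is a partition of the finite set `M`. -/
def IsPartition (M : Finset ℕ) (π : Finset (Finset ℕ)) : Prop :=
  (∀ B ∈ π, B ⊆ M) ∧ ∅ ∉ π ∧ ∀ x ∈ M, (π.filter (fun B => x ∈ B)).card = 1

instance (M : Finset ℕ) : DecidablePred (IsPartition M) := fun π => by
  unfold IsPartition; infer_instance

/-- The finite set of all partitions of `M`. -/
def partitionsOf (M : Finset ℕ) : Finset (Finset (Finset ℕ)) :=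
  (M.powerset.powerset).filter (IsPartition M)

/-- The Ewens(θ = 1) probability of the partition `π` of `M`:
`p*_M(π) = ∏_{B ∈ π} (|B| - 1)! / |M|!`. -/
noncomputable def pstar (M : Finset ℕ) (π : Finset (Finset ℕ)) : ℝ :=
  (∏ B ∈ π, ((B.card - 1).factorial : ℝ)) / (M.card.factorial : ℝ)

/-- The block of `π` containing `j` (junk if `π` is not a partition containing `j`). -/
def blockOf (π : Finset (Finset ℕ)) (j : ℕ) : Finset ℕ :=
  (π.filter (fun B => j ∈ B)).sup id

/-- Add player `i` to the block `B` of `π`. -/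
def addToBlock (π : Finset (Finset ℕ)) (i : ℕ) (B : Finset ℕ) : Finset (Finset ℕ) :=
  insert (insert i B) (π.erase B)

/-- The restriction operator `r⋆` removing a single player `i` from a game on `N`:
`w₋ᵢ(S,π) = (1/(n-s)) (w(S, π₊ᵢ⇝∅) + ∑_{j ∈ N∖(S∪{i})} w(S, π₊ᵢ⇝π(j)))`. -/
noncomputable def restrict1 (N : Finset ℕ) (w : Game) (i : ℕ) : Game :=
  fun S π =>
    ((N.card : ℝ) - (S.card : ℝ))⁻¹ *
      (w S (insert {i} π) + ∑ j ∈ (N \ S).erase i, w S (addToBlock π i (blockOf π j)))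

/-- Iterated removal of a list of players. -/
noncomputable def restrictL : Finset ℕ → Game → List ℕ → Game
  | _, w, [] => w
  | N, w, i :: l => restrictL (N.erase i) (restrict1 N w i) l

/-- Removal of a set of players (via the increasing enumeration; by path
independence of `r⋆` the order is immaterial). -/
noncomputable def restrictSet (N : Finset ℕ) (w : Game) (T : Finset ℕ) : Game :=
  restrictL N w (T.sort (· ≤ ·))

/-- The average TU game `v̄_w` of a TUX game `w` on `N`. -/
noncomputable def avg (N : Finset ℕ) (w : Game) : TUGame :=
  fun S => ∑ π ∈ partitionsOf (N \ S), pstar (N \ S) π * w S π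

/-- The auxiliary TU game `v*_w(S) = w₋(N∖S)(S,∅)`. -/
noncomputable def auxGame (N : Finset ℕ) (w : Game) : TUGame :=
  fun S => restrictSet N w (N \ S) S ∅

/-- The Shapley value of a TU game on player set `N`. -/
noncomputable def shapley (N : Finset ℕ) (v : TUGame) (i : ℕ) : ℝ :=
  ∑ S ∈ (N.erase i).powerset,
    (((S.card.factorial : ℝ) * ((N.card - S.card - 1).factorial : ℝ)) / (N.card.factorial : ℝ)) *
      (v (insert i S) - v S)

/-- The MPW solution: the Shapley value of the average game. -/
noncomputable def MPW (N : Finset ℕ) (w : Game) (i : ℕ) : ℝ := shapley N (avg N w) i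

/-- The MPW solution as a solution for TUX games. -/
noncomputable def MPWsol : Sol := fun N w i => MPW N w i

/-- The scaled Dirac TUX game `δ_{T,τ}` on `N`. -/
noncomputable def scaledDirac (N T : Finset ℕ) (τ : Finset (Finset ℕ)) : Game :=
  fun S π => if S = T ∧ π = τ then (pstar (N \ T) τ)⁻¹ else 0

/-- `τ₋S`: remove the players of `S` from each block of `τ`, discarding empty blocks. -/
def partRemove (τ : Finset (Finset ℕ)) (S : Finset ℕ) : Finset (Finset ℕ) :=
  (τ.image (fun B => B \ S)).erase ∅

/-- The Sobolev-reduced TUX game `w₋ⱼ^{So,φ}` on `N ∖ {j}`. -/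
noncomputable def sobRed (N : Finset ℕ) (φ : Sol) (w : Game) (j : ℕ) : Game :=
  fun S π =>
    ((S.card : ℝ) / ((N.card : ℝ) - 1)) * (w (insert j S) π - φ N w j) +
      (1 - (S.card : ℝ) / ((N.card : ℝ) - 1)) * restrict1 N w j S π

/-- The Hart–Mas-Colell reduced TUX game `w₋T^{HM,φ}` on `N ∖ T`. -/
noncomputable def hmRed (N : Finset ℕ) (φ : Sol) (w : Game) (T : Finset ℕ) : Game :=
  fun S π => w (S ∪ T) π - ∑ j ∈ T, φ (S ∪ T) (restrictSet N w (N \ (S ∪ T))) j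

/-- Efficiency for TUX games. -/
def EfficientX (φ : Sol) : Prop :=
  ∀ (N : Finset ℕ) (w : Game), IsTUX w → ∑ i ∈ N, φ N w i = w N ∅

/-- Balanced contributions for TUX games (w.r.t. the restriction operator `r⋆`). -/
def BalancedContributionsX (φ : Sol) : Prop :=
  ∀ (N : Finset ℕ) (w : Game), IsTUX w → ∀ i ∈ N, ∀ j ∈ N,
    φ N w i - φ (N.erase j) (restrict1 N w j) i
      = φ N w j - φ (N.erase i) (restrict1 N w i) j

/-- 2-standardness for TUX games. -/
def TwoStandardX (φ : Sol) : Prop :=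
  ∀ i j : ℕ, i ≠ j → ∀ w : Game, IsTUX w →
    φ {i, j} w i
      = w {i} {({j} : Finset ℕ)}
        + (w {i, j} ∅ - w {j} {({i} : Finset ℕ)} - w {i} {({j} : Finset ℕ)}) / 2

/-- Sobolev consistency for TUX games. -/
def SobolevConsistentX (φ : Sol) : Prop :=
  ∀ (N : Finset ℕ) (w : Game), IsTUX w → ∀ i ∈ N, ∀ j ∈ N, i ≠ j →
    φ N w i = φ (N.erase j) (sobRed N φ w j) i

/-- Hart–Mas-Colell consistency (single-player removal) for TUX games. -/
def HMConsistentX (φ : Sol) : Prop :=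
  ∀ (N : Finset ℕ) (w : Game), IsTUX w → ∀ i ∈ N, ∀ j ∈ N, i ≠ j →
    φ N w i = φ (N.erase j) (hmRed N φ w {j}) i

/-- Set Hart–Mas-Colell consistency (removal of a coalition) for TUX games. -/
def SetHMConsistentX (φ : Sol) : Prop :=
  ∀ (N : Finset ℕ) (w : Game), IsTUX w → ∀ i ∈ N, ∀ T ⊆ N.erase i,
    φ N w i = φ (N \ T) (hmRed N φ w T) i

/-- The finite set of embedded coalitions `(T,τ)` of `N` with `T ≠ ∅`. -/
def embeddedNE (N : Finset ℕ) : Finset (Finset ℕ × Finset (Finset ℕ)) :=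
  (N.powerset ×ˢ N.powerset.powerset).filter
    (fun p => p.1.Nonempty ∧ IsPartition (N \ p.1) p.2)

end TUX

/-!
Adding player `j` to an Ewens-distributed partition of `M`, as a new singleton block with
probability `1/(|M|+1)` or into a block `B` with probability `|B|/(|M|+1)`, yields the Ewens
distribution on partitions of `insert j M`. Hence averaging over partitions commutes with the
restriction `r⋆`, and since the weights `p*` sum to one, the average game of `w₋ⱼ^{So,MPW}` is
the Sobolev reduction of the TU game `v̄_w` with respect to the Shapley value. The theorem thus
reduces to Sobolev consistency of the Shapley value, which holds summand by summand once the
coalitions of `N ∖ {i}` are split according to whether they contain `j`.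
-/

namespace TUX

section Partitions

variable {M : Finset ℕ} {π : Finset (Finset ℕ)} {j : ℕ}

lemma mem_partitionsOf : π ∈ partitionsOf M ↔ IsPartition M π := by
  simp only [partitionsOf, mem_filter, mem_powerset, and_iff_right_iff_imp]
  exact fun h B hB => mem_powerset.2 (h.1 B hB)

lemma isPartition_iff_existsUnique : IsPartition M π ↔
    (∀ B ∈ π, B ⊆ M) ∧ ∅ ∉ π ∧ ∀ x ∈ M, ∃! B, B ∈ π ∧ x ∈ B := by
  simp only [IsPartition, card_eq_one_iff_existsUnique, mem_filter]

lemma IsPartition.eq_of_mem (h : IsPartition M π) {x : ℕ} {B C : Finset ℕ}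
    (hB : B ∈ π) (hxB : x ∈ B) (hC : C ∈ π) (hxC : x ∈ C) : B = C :=
  ((isPartition_iff_existsUnique.1 h).2.2 x (h.1 B hB hxB)).unique ⟨hB, hxB⟩ ⟨hC, hxC⟩

lemma IsPartition.filter_mem_eq (h : IsPartition M π) {x : ℕ} (hx : x ∈ M) :
    π.filter (fun B => x ∈ B) = {blockOf π x} := by
  obtain ⟨B, hB⟩ := card_eq_one.1 (h.2.2 x hx)
  rw [blockOf, hB, sup_singleton, id]

lemma IsPartition.blockOf_mem (h : IsPartition M π) {x : ℕ} (hx : x ∈ M) :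
    blockOf π x ∈ π ∧ x ∈ blockOf π x := by
  have hmem : blockOf π x ∈ π.filter (fun B => x ∈ B) := by
    rw [h.filter_mem_eq hx]; exact mem_singleton_self _
  exact mem_filter.1 hmem

lemma IsPartition.blockOf_eq (h : IsPartition M π) {x : ℕ} {B : Finset ℕ}
    (hB : B ∈ π) (hx : x ∈ B) : blockOf π x = B :=
  have hxM := h.1 B hB hx
  h.eq_of_mem (h.blockOf_mem hxM).1 (h.blockOf_mem hxM).2 hB hx

lemma isPartition_partRemove (h : IsPartition M π) (S : Finset ℕ) :
    IsPartition (M \ S) (partRemove π S) := by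
  refine isPartition_iff_existsUnique.2 ⟨?_, notMem_erase ∅ _, fun x hx => ?_⟩
  · simp only [partRemove, mem_erase, mem_image]
    rintro _ ⟨-, B, hB, rfl⟩
    exact sdiff_subset_sdiff (h.1 B hB) subset_rfl
  · obtain ⟨hxM, hxS⟩ := mem_sdiff.1 hx
    obtain ⟨hBx, hxB⟩ := h.blockOf_mem hxM
    refine ⟨blockOf π x \ S, ⟨?_, mem_sdiff.2 ⟨hxB, hxS⟩⟩, ?_⟩
    · simp only [partRemove, mem_erase, mem_image]
      exact ⟨ne_empty_of_mem (mem_sdiff.2 ⟨hxB, hxS⟩), _, hBx, rfl⟩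
    · simp only [partRemove, mem_erase, mem_image]
      rintro _ ⟨⟨-, C, hC, rfl⟩, hxC⟩
      rw [h.blockOf_eq hC (mem_sdiff.1 hxC).1]

lemma isPartition_addToBlock (h : IsPartition M π) (hj : j ∉ M) {B : Finset ℕ}
    (hB : B ∈ insert ∅ π) : IsPartition (insert j M) (addToBlock π j B) := by
  have hBM : B ⊆ M := by
    rcases mem_insert.1 hB with rfl | hB
    exacts [empty_subset M, h.1 B hB]
  have hjπ : ∀ C ∈ π, j ∉ C := fun C hC hjC => hj (h.1 C hC hjC)
  refine isPartition_iff_existsUnique.2 ⟨?_, ?_, fun x hx => ?_⟩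
  · simp only [addToBlock, forall_mem_insert]
    exact ⟨insert_subset_insert j hBM,
      fun C hC => (h.1 C (mem_of_mem_erase hC)).trans (subset_insert j M)⟩
  · simp only [addToBlock, mem_insert, mem_erase, not_or]
    exact ⟨(insert_ne_empty j B).symm, fun hc => h.2.1 hc.2⟩
  · simp only [addToBlock, mem_insert, mem_erase]
    by_cases hxjB : x ∈ insert j B
    · refine ⟨insert j B, ⟨Or.inl rfl, hxjB⟩, ?_⟩
      rintro C ⟨rfl | ⟨hCB, hC⟩, hxC⟩
      · rfl
      rcases mem_insert.1 hxjB with rfl | hxB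
      · exact absurd hxC (hjπ C hC)
      · rcases mem_insert.1 hB with rfl | hBπ
        · exact absurd hxB (notMem_empty x)
        · exact absurd (h.eq_of_mem hC hxC hBπ hxB) hCB
    · have hxM : x ∈ M :=
        (mem_insert.1 hx).resolve_left fun hc => hxjB (hc ▸ mem_insert_self x B)
      obtain ⟨hBx, hxBx⟩ := h.blockOf_mem hxM
      refine ⟨blockOf π x,
        ⟨Or.inr ⟨fun hc => hxjB (hc ▸ mem_insert_of_mem hxBx), hBx⟩, hxBx⟩, ?_⟩
      rintro C ⟨rfl | ⟨-, hC⟩, hxC⟩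
      · exact absurd hxC hxjB
      · exact (h.blockOf_eq hC hxC).symm

lemma IsPartition.partRemove_singleton (h : IsPartition M π) (hj : j ∈ M) :
    partRemove π {j} = (insert ((blockOf π j).erase j) (π.erase (blockOf π j))).erase ∅ := by
  have hjπ : ∀ C ∈ π.erase (blockOf π j), j ∉ C := fun C hC hjC =>
    ne_of_mem_erase hC (h.blockOf_eq (mem_of_mem_erase hC) hjC).symm
  have himage :
      π.image (· \ {j}) = insert ((blockOf π j).erase j) (π.erase (blockOf π j)) := by
    conv_lhs => rw [← insert_erase (h.blockOf_mem hj).1]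
    rw [image_insert, sdiff_singleton_eq_erase,
      image_congr (g := id) fun C hC => by simpa using hjπ C hC, image_id]
  rw [partRemove, himage]

lemma IsPartition.erase_blockOf_notMem (h : IsPartition M π) (hj : j ∈ M) :
    (blockOf π j).erase j ∉ π.erase (blockOf π j) := by
  intro hmem
  obtain ⟨hne, hπ⟩ := mem_erase.1 hmem
  obtain ⟨x, hx⟩ := nonempty_iff_ne_empty.2 fun he => h.2.1 (he ▸ hπ)
  exact hne (h.eq_of_mem hπ hx (h.blockOf_mem hj).1 (mem_of_mem_erase hx))

lemma IsPartition.addToBlock_partRemove (h : IsPartition M π) (hj : j ∈ M) :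
    addToBlock (partRemove π {j}) j ((blockOf π j).erase j) = π := by
  obtain ⟨hBπ, hjB⟩ := h.blockOf_mem hj
  rw [h.partRemove_singleton hj, addToBlock, insert_erase hjB, erase_right_comm,
    erase_insert (h.erase_blockOf_notMem hj),
    erase_eq_of_notMem fun he => h.2.1 (mem_of_mem_erase he), insert_erase hBπ]

lemma IsPartition.partRemove_addToBlock (h : IsPartition M π) (hj : j ∉ M) {B : Finset ℕ}
    (hB : B ∈ insert ∅ π) :
    partRemove (addToBlock π j B) {j} = π ∧ (blockOf (addToBlock π j B) j).erase j = B := by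
  have h' := isPartition_addToBlock h hj hB
  have hjB : j ∉ B := by
    rcases mem_insert.1 hB with rfl | hB
    exacts [notMem_empty j, fun hjB => hj (h.1 B hB hjB)]
  have hblock : blockOf (addToBlock π j B) j = insert j B :=
    h'.blockOf_eq (mem_insert_self _ _) (mem_insert_self j B)
  have hnew : insert j B ∉ π.erase B :=
    fun hc => hj (h.1 _ (mem_of_mem_erase hc) (mem_insert_self j B))
  refine ⟨?_, by rw [hblock, erase_insert hjB]⟩
  rw [h'.partRemove_singleton (mem_insert_self j M), hblock, erase_insert hjB, addToBlock,
    erase_insert hnew]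
  rcases mem_insert.1 hB with rfl | hBπ
  · rw [erase_eq_of_notMem h.2.1, erase_insert h.2.1]
  · rw [insert_erase hBπ, erase_eq_of_notMem h.2.1]

lemma addToBlock_empty (h : ∅ ∉ π) : addToBlock π j ∅ = insert {j} π := by
  rw [addToBlock, erase_eq_of_notMem h]; rfl

/-- A partition of `insert j M` arises from a unique partition of `M` by letting `j` join
one of its blocks or form a block of its own. -/
lemma sum_partitionsOf_insert (hj : j ∉ M) (g : Finset (Finset ℕ) → ℝ) :
    ∑ π' ∈ partitionsOf (insert j M), g π' =
      ∑ π ∈ partitionsOf M, (g (insert {j} π) + ∑ B ∈ π, g (addToBlock π j B)) := by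
  have hsplit : ∀ π ∈ partitionsOf M, g (insert {j} π) + ∑ B ∈ π, g (addToBlock π j B) =
      ∑ B ∈ insert ∅ π, g (addToBlock π j B) := fun π hπ => by
    rw [sum_insert (mem_partitionsOf.1 hπ).2.1, addToBlock_empty (mem_partitionsOf.1 hπ).2.1]
  rw [sum_congr rfl hsplit, sum_sigma']
  symm
  refine sum_bij' (fun p _ => addToBlock p.1 j p.2)
    (fun π' _ => ⟨partRemove π' {j}, (blockOf π' j).erase j⟩) ?_ ?_ ?_ ?_ fun _ _ => rfl
  · rintro ⟨π, B⟩ hp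
    obtain ⟨hπ, hB⟩ := mem_sigma.1 hp
    exact mem_partitionsOf.2 (isPartition_addToBlock (mem_partitionsOf.1 hπ) hj hB)
  · intro π' hπ'
    have h := mem_partitionsOf.1 hπ'
    refine mem_sigma.2 ⟨mem_partitionsOf.2 ?_, ?_⟩
    · simpa [sdiff_singleton_eq_erase, erase_insert hj] using isPartition_partRemove h {j}
    · rw [h.partRemove_singleton (mem_insert_self j M)]
      by_cases he : (blockOf π' j).erase j = ∅
      · exact mem_insert.2 (Or.inl he)
      · exact mem_insert_of_mem (mem_erase.2 ⟨he, mem_insert_self _ _⟩)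
  · rintro ⟨π, B⟩ hp
    obtain ⟨hπ, hB⟩ := mem_sigma.1 hp
    obtain ⟨hrem, hblock⟩ := (mem_partitionsOf.1 hπ).partRemove_addToBlock hj hB
    simp only [hrem, hblock]
  · intro π' hπ'
    exact (mem_partitionsOf.1 hπ').addToBlock_partRemove (mem_insert_self j M)

lemma sum_blockOf (h : IsPartition M π) (f : Finset ℕ → ℝ) :
    ∑ k ∈ M, f (blockOf π k) = ∑ B ∈ π, (B.card : ℝ) * f B := by
  have hsingle : ∀ k ∈ M, f (blockOf π k) = ∑ B ∈ π, if k ∈ B then f B else 0 :=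
    fun k hk => by rw [← sum_filter, h.filter_mem_eq hk, sum_singleton]
  rw [sum_congr rfl hsingle, sum_comm]
  refine sum_congr rfl fun B hB => ?_
  rw [sum_ite_mem, inter_eq_right.2 (h.1 B hB), sum_const, nsmul_eq_mul]

lemma sum_card_blocks (h : IsPartition M π) : ∑ B ∈ π, (B.card : ℝ) = M.card := by
  simpa using (sum_blockOf h fun _ => (1 : ℝ)).symm

lemma pstar_insert_singleton (h : IsPartition M π) (hj : j ∉ M) :
    pstar (insert j M) (insert {j} π) = pstar M π / ((M.card : ℝ) + 1) := by
  have hnew : {j} ∉ π := fun hc => hj (h.1 _ hc (mem_singleton_self j))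
  rw [pstar, pstar, prod_insert hnew, card_insert_of_notMem hj, card_singleton,
    Nat.factorial_succ]
  push_cast
  rw [Nat.factorial_zero, Nat.cast_one, one_mul, div_div, mul_comm]

lemma pstar_addToBlock (h : IsPartition M π) (hj : j ∉ M) {B : Finset ℕ} (hB : B ∈ π) :
    pstar (insert j M) (addToBlock π j B) =
      (B.card : ℝ) / ((M.card : ℝ) + 1) * pstar M π := by
  have hnew : insert j B ∉ π.erase B :=
    fun hc => hj (h.1 _ (mem_of_mem_erase hc) (mem_insert_self j B))
  have hjB : j ∉ B := fun hjB => hj (h.1 B hB hjB)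
  have hBpos : 0 < B.card := card_pos.2 (nonempty_iff_ne_empty.2 fun he => h.2.1 (he ▸ hB))
  rw [pstar, pstar, addToBlock, prod_insert hnew, card_insert_of_notMem hjB,
    card_insert_of_notMem hj, Nat.add_sub_cancel, ← Nat.mul_factorial_pred hBpos.ne',
    ← mul_prod_erase π _ hB, Nat.factorial_succ]
  push_cast
  field_simp

lemma partitionsOf_empty : partitionsOf ∅ = {∅} := by decide

theorem sum_pstar (M : Finset ℕ) : ∑ π ∈ partitionsOf M, pstar M π = 1 := by
  induction M using Finset.induction_on with
  | empty => simp [partitionsOf_empty, pstar]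
  | @insert j M hj ih =>
    rw [sum_partitionsOf_insert hj, ← ih]
    refine sum_congr rfl fun π hπ => ?_
    have h := mem_partitionsOf.1 hπ
    rw [pstar_insert_singleton h hj, sum_congr rfl fun B hB => pstar_addToBlock h hj hB,
      ← sum_mul, ← sum_div, sum_card_blocks h]
    field_simp
    ring

end Partitions

section Shapley

-- The weight in `shapley` of a coalition of size `s` in a game on `m + 1` players.
noncomputable def shapleyWeight (m s : ℕ) : ℝ :=
  (s.factorial * (m - s).factorial : ℝ) / (m + 1).factorial

lemma shapleyWeight_succ {m s : ℕ} (hs : s ≤ m) :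
    shapleyWeight (m + 1) s = ((m : ℝ) + 1 - s) / ((m : ℝ) + 2) * shapleyWeight m s := by
  obtain ⟨t, rfl⟩ := Nat.exists_eq_add_of_le hs
  rw [shapleyWeight, shapleyWeight, show s + t + 1 - s = t + 1 by omega, Nat.add_sub_cancel_left,
    Nat.factorial_succ t, Nat.factorial_succ (s + t + 1)]
  push_cast
  field_simp
  ring

lemma shapleyWeight_succ_succ (m s : ℕ) :
    shapleyWeight (m + 1) (s + 1) = ((s : ℝ) + 1) / ((m : ℝ) + 2) * shapleyWeight m s := by
  rw [shapleyWeight, shapleyWeight, Nat.add_sub_add_right, Nat.factorial_succ,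
    Nat.factorial_succ (m + 1)]
  push_cast
  field_simp
  ring

lemma sum_shapleyWeight (E : Finset ℕ) :
    ∑ S ∈ E.powerset, shapleyWeight E.card S.card = 1 := by
  have hterm : ∀ k ∈ range (E.card + 1),
      E.card.choose k • shapleyWeight E.card k = ((E.card : ℝ) + 1)⁻¹ := fun k hk => by
    rw [nsmul_eq_mul, shapleyWeight, ← mul_div_assoc, ← mul_assoc, ← Nat.cast_mul,
      ← Nat.cast_mul,
      Nat.choose_mul_factorial_mul_factorial (Nat.lt_succ_iff.1 (mem_range.1 hk)),
      Nat.factorial_succ]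
    push_cast
    field_simp
  rw [sum_powerset_apply_card, sum_congr rfl hterm, sum_const, card_range, nsmul_eq_mul]
  push_cast
  field_simp

/-- The Sobolev-reduced TU game `v₋ⱼ^{So,Sh}` on `N ∖ {j}`. -/
noncomputable def sobRedTU (N : Finset ℕ) (v : TUGame) (j : ℕ) : TUGame :=
  fun S => ((S.card : ℝ) / ((N.card : ℝ) - 1)) * (v (insert j S) - shapley N v j) +
    (1 - (S.card : ℝ) / ((N.card : ℝ) - 1)) * v S

variable {v : TUGame} {i j : ℕ}

lemma shapley_insert {M : Finset ℕ} (hi : i ∉ M) :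
    shapley (insert i M) v i =
      ∑ S ∈ M.powerset, shapleyWeight M.card S.card * (v (insert i S) - v S) := by
  rw [shapley, erase_insert hi, card_insert_of_notMem hi]
  refine sum_congr rfl fun S _ => ?_
  rw [shapleyWeight, show M.card + 1 - S.card - 1 = M.card - S.card by omega]

lemma shapley_insert_insert {E : Finset ℕ} (hi : i ∉ E) (hj : j ∉ E) (hij : i ≠ j) :
    shapley (insert i (insert j E)) v i =
      ∑ S ∈ E.powerset, (shapleyWeight (E.card + 1) S.card * (v (insert i S) - v S) +
        shapleyWeight (E.card + 1) (S.card + 1) *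
          (v (insert i (insert j S)) - v (insert j S))) := by
  rw [shapley_insert fun h => (mem_insert.1 h).elim hij hi, sum_powerset_insert hj,
    ← sum_add_distrib, card_insert_of_notMem hj]
  refine sum_congr rfl fun S hS => ?_
  rw [card_insert_of_notMem fun h => hj (mem_powerset.1 hS h)]

-- The `i`-summand of `shapley_insert_insert`, plus `1/(n-1)` times the `j`-summand minus its
-- share of `shapley N v j`: summed over `S`, the `j`-terms cancel since the weights sum to one.
lemma shapleyWeight_mul_sobRedTU_sub {N S : Finset ℕ} {e : ℕ} (hN : N.card = e + 2)
    (hiS : i ∉ S) (hSe : S.card ≤ e) :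
    shapleyWeight e S.card * (sobRedTU N v j (insert i S) - sobRedTU N v j S) =
      shapleyWeight (e + 1) S.card * (v (insert i S) - v S) +
        shapleyWeight (e + 1) (S.card + 1) * (v (insert i (insert j S)) - v (insert j S)) +
      (shapleyWeight (e + 1) S.card * (v (insert j S) - v S) +
        shapleyWeight (e + 1) (S.card + 1) * (v (insert j (insert i S)) - v (insert i S)) -
        shapleyWeight e S.card * shapley N v j) / ((e : ℝ) + 1) := by
  rw [sobRedTU, sobRedTU, card_insert_of_notMem hiS, hN, shapleyWeight_succ hSe,
    shapleyWeight_succ_succ, insert_comm i j,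
    show ((e + 2 : ℕ) : ℝ) - 1 = e + 1 by push_cast; ring]
  push_cast
  field_simp
  ring

theorem shapley_sobRedTU {N : Finset ℕ} (hi : i ∈ N) (hj : j ∈ N) (hij : i ≠ j) :
    shapley (N.erase j) (sobRedTU N v j) i = shapley N v i := by
  obtain ⟨E, hiE, hjE, rfl⟩ : ∃ E, i ∉ E ∧ j ∉ E ∧ N = insert i (insert j E) :=
    ⟨(N.erase i).erase j, fun h => (mem_erase.1 (mem_of_mem_erase h)).1 rfl, notMem_erase j _, by
      rw [insert_erase (mem_erase.2 ⟨hij.symm, hj⟩), insert_erase hi]⟩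
  have hN : (insert i (insert j E)).card = E.card + 2 := by
    rw [card_insert_of_notMem fun h => (mem_insert.1 h).elim hij hiE, card_insert_of_notMem hjE]
  rw [erase_insert_of_ne hij, erase_insert hjE, shapley_insert hiE,
    sum_congr rfl fun S hS => shapleyWeight_mul_sobRedTU_sub hN
      (fun h => hiE (mem_powerset.1 hS h)) (card_le_card (mem_powerset.1 hS)),
    sum_add_distrib, ← sum_div, sum_sub_distrib, ← sum_mul, sum_shapleyWeight,
    ← shapley_insert_insert hiE hjE hij, ← shapley_insert_insert hjE hiE hij.symm,
    insert_comm j i]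
  ring

lemma shapley_congr {N : Finset ℕ} {u : TUGame} (hi : i ∈ N) (h : ∀ S ⊆ N, u S = v S) :
    shapley N u i = shapley N v i := by
  refine sum_congr rfl fun S hS => ?_
  have hS' : S ⊆ N := (mem_powerset.1 hS).trans (erase_subset i N)
  rw [h S hS', h (insert i S) (insert_subset hi hS')]

end Shapley

section AverageGame

variable {N S : Finset ℕ} {w : Game} {j : ℕ}

theorem avg_restrict1 (hjN : j ∈ N) (hS : S ⊆ N) (hjS : j ∉ S) :
    avg (N.erase j) (restrict1 N w j) S = avg N w S := by
  have hNS : N \ S = insert j (N.erase j \ S) := by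
    rw [erase_sdiff_comm, insert_erase (mem_sdiff.2 ⟨hjN, hjS⟩)]
  have hjM : j ∉ N.erase j \ S := by simp
  unfold avg
  generalize hM : N.erase j \ S = M at hNS hjM ⊢
  have hcard : (N.card : ℝ) - S.card = M.card + 1 := by
    have h := card_sdiff_of_subset hS
    rw [hNS, card_insert_of_notMem hjM] at h
    have := card_le_card hS
    rw [sub_eq_iff_eq_add, ← Nat.cast_add_one, ← Nat.cast_add]
    exact_mod_cast (by omega : N.card = M.card + 1 + S.card)
  rw [hNS, sum_partitionsOf_insert hjM]
  refine sum_congr rfl fun π hπ => ?_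
  have h := mem_partitionsOf.1 hπ
  have hjoin : ∑ B ∈ π, pstar (insert j M) (addToBlock π j B) * w S (addToBlock π j B) =
      pstar M π * ((M.card + 1 : ℝ)⁻¹ * ∑ B ∈ π, B.card * w S (addToBlock π j B)) := by
    rw [mul_sum, mul_sum]
    exact sum_congr rfl fun B hB => by rw [pstar_addToBlock h hjM hB]; ring
  rw [restrict1, hcard, ← erase_sdiff_comm, hM, sum_blockOf h fun B => w S (addToBlock π j B),
    pstar_insert_singleton h hjM, hjoin]
  ring

theorem avg_sobRed (hjN : j ∈ N) (hS : S ⊆ N.erase j) :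
    avg (N.erase j) (sobRed N MPWsol w j) S = sobRedTU N (avg N w) j S := by
  have hjS : j ∉ S := fun h => (mem_erase.1 (hS h)).1 rfl
  set a := (S.card : ℝ) / ((N.card : ℝ) - 1)
  set p := pstar (N.erase j \ S)
  calc avg (N.erase j) (sobRed N MPWsol w j) S
      = ∑ π ∈ partitionsOf (N.erase j \ S), (a * (p π * w (insert j S) π)
          - a * MPW N w j * p π + (1 - a) * (p π * restrict1 N w j S π)) :=
        sum_congr rfl fun π _ => by rw [sobRed, MPWsol]; ring
    _ = a * avg N w (insert j S) - a * MPW N w j * 1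
          + (1 - a) * avg (N.erase j) (restrict1 N w j) S := by
        rw [sum_add_distrib, sum_sub_distrib, ← mul_sum, ← mul_sum, ← mul_sum, sum_pstar, avg,
          avg, sdiff_insert, ← erase_sdiff_comm]
    _ = sobRedTU N (avg N w) j S := by
        rw [avg_restrict1 hjN (hS.trans (erase_subset j N)) hjS, sobRedTU, MPW]
        ring

end AverageGame

end TUX

open TUX in
theorem MPW_sobolev_consistent_general (N : Finset ℕ) (w : Game)
    (i j : ℕ) (hi : i ∈ N) (hj : j ∈ N) (hij : i ≠ j) :
    MPW N w i = MPW (N.erase j) (sobRed N MPWsol w j) i := by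
  rw [MPW, MPW, ← shapley_sobRedTU hi hj hij]
  exact shapley_congr (mem_erase.2 ⟨hij, hi⟩) fun S hS => (avg_sobRed hj hS).symm

open TUX in
/-- The MPW solution satisfies Sobolev consistency for TUX games. -/
theorem MPW_sobolev_consistent (N : Finset ℕ) (w : Game) (hw : IsTUX w)
    (i j : ℕ) (hi : i ∈ N) (hj : j ∈ N) (hij : i ≠ j) :
    MPW N w i = MPW (N.erase j) (sobRed N MPWsol w j) i :=
  MPW_sobolev_consistent_general N w i j hi hj hij
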